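/- Let u ∈ W^{1,2}_loc(Ω, ℂ) on an open set Ω ⊆ ℂ, let Γ ⊆ CO(2) be a compact set of conformal matrices, and let K ≥ 1. Then Du(z) ∈ ℰ_Γ := {X : ‖A − X‖² ≤ K det(A − X) for all A ∈ Γ} if and only if |∂_z̄ u(z)| ≤ ((K−1)/(K+1)) · dist(∂_z u(z), Γ'), where Γ' ⊆ ℂ is the set of complex numbers corresponding to Γ under the identification CO(2) ≅ ℂ. -/

import Mathlib

/-!
Under `ℝ² ≅ ℂ`, `toMat ap am` is the real-linear map `z ↦ ap z + am z̄`, whose operator norm is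
`|ap| + |am|` (the two terms can be aligned on the unit circle) and whose determinant is
`|ap|² - |am|²`. Since `Γ ⊆ CO(2)`, `A - Du` has Wirtinger coordinates `(a - ∂_z u, -∂_z̄ u)`,
and with `s = |a - ∂_z u|`, `t = |∂_z̄ u|` the envelope condition `(s + t)² ≤ K (s² - t²)` is,
after cancelling `s + t`, the linear inequality `t ≤ (K - 1)/(K + 1) · s`. Taking it for all
`a ∈ Γ'` is the same as taking it at the infimum `dist(∂_z u, Γ')`.
-/

open Matrix Metric

/-- Operator (ℓ²→ℓ²) norm of a real 2×2 matrix. -/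
noncomputable def opNorm (A : Matrix (Fin 2) (Fin 2) ℝ) : ℝ :=
  ‖Matrix.toEuclideanCLM (𝕜 := ℝ) A‖

/-- The real 2×2 matrix corresponding, under the identification ℝ² ≅ ℂ, to the
real-linear map `z ↦ a₊ z + a₋ conj z`. -/
noncomputable def toMat (ap am : ℂ) : Matrix (Fin 2) (Fin 2) ℝ :=
  !![ap.re + am.re, -ap.im + am.im; ap.im + am.im, ap.re - am.re]

open ComplexConjugate

lemma toMat_sub_toMat (a b c d : ℂ) : toMat a b - toMat c d = toMat (a - c) (b - d) := by
  ext i j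
  fin_cases i <;> fin_cases j <;> simp [toMat] <;> ring

lemma det_toMat (ap am : ℂ) : (toMat ap am).det = ‖ap‖ ^ 2 - ‖am‖ ^ 2 := by
  simp only [toMat, det_fin_two_of, Complex.sq_norm, Complex.normSq_apply]
  ring

lemma toEuclideanCLM_toMat_repr (ap am z : ℂ) :
    toEuclideanCLM (𝕜 := ℝ) (toMat ap am) (Complex.orthonormalBasisOneI.repr z) =
      Complex.orthonormalBasisOneI.repr (ap * z + am * conj z) := by
  ext i
  fin_cases i <;> simp [toMat, Matrix.mulVec, dotProduct, Fin.sum_univ_two] <;> ring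

lemma exists_norm_eq_one_norm_add_conj (ap am : ℂ) :
    ∃ z : ℂ, ‖z‖ = 1 ∧ ‖ap * z + am * conj z‖ = ‖ap‖ + ‖am‖ := by
  -- the rotation by half the difference of the arguments aligns `ap * z` with `am * conj z`
  set θ := (am.arg - ap.arg) / 2
  refine ⟨Complex.exp (θ * Complex.I), Complex.norm_exp_ofReal_mul_I θ, ?_⟩
  have h : ap * Complex.exp (θ * Complex.I) + am * conj (Complex.exp (θ * Complex.I)) =
      (‖ap‖ + ‖am‖ : ℝ) * Complex.exp (((ap.arg + am.arg) / 2 : ℝ) * Complex.I) := by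
    conv_lhs => rw [← Complex.norm_mul_exp_arg_mul_I ap, ← Complex.norm_mul_exp_arg_mul_I am]
    rw [← Complex.exp_conj, map_mul, Complex.conj_ofReal, Complex.conj_I]
    simp only [θ, mul_assoc, ← Complex.exp_add]
    push_cast
    ring_nf
  rw [h, norm_mul, Complex.norm_exp_ofReal_mul_I, mul_one, Complex.norm_real, Real.norm_eq_abs,
    abs_of_nonneg (by positivity)]

lemma opNorm_toMat (ap am : ℂ) : opNorm (toMat ap am) = ‖ap‖ + ‖am‖ := by
  set e := Complex.orthonormalBasisOneI.repr
  have hnorm : ∀ z, ‖toEuclideanCLM (𝕜 := ℝ) (toMat ap am) (e z)‖ = ‖ap * z + am * conj z‖ :=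
    fun z => by rw [toEuclideanCLM_toMat_repr, LinearIsometryEquiv.norm_map]
  refine le_antisymm (ContinuousLinearMap.opNorm_le_bound _ (by positivity) fun v => ?_) ?_
  · obtain ⟨z, rfl⟩ := e.surjective v
    rw [hnorm, e.norm_map]
    calc ‖ap * z + am * conj z‖ ≤ ‖ap * z‖ + ‖am * conj z‖ := norm_add_le _ _
      _ = (‖ap‖ + ‖am‖) * ‖z‖ := by rw [norm_mul, norm_mul, Complex.norm_conj, add_mul]
  · obtain ⟨z, hz, hmax⟩ := exists_norm_eq_one_norm_add_conj ap am
    calc ‖ap‖ + ‖am‖ = ‖toEuclideanCLM (𝕜 := ℝ) (toMat ap am) (e z)‖ := by rw [hnorm, hmax]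
      _ ≤ opNorm (toMat ap am) * ‖e z‖ := ContinuousLinearMap.le_opNorm _ _
      _ = opNorm (toMat ap am) := by rw [e.norm_map, hz, mul_one]

lemma sq_add_le_mul_sq_sub_sq_iff {K s t : ℝ} (hK : 0 < K + 1) (hs : 0 ≤ s) (ht : 0 ≤ t) :
    (s + t) ^ 2 ≤ K * (s ^ 2 - t ^ 2) ↔ t ≤ (K - 1) / (K + 1) * s := by
  rw [div_mul_eq_mul_div, le_div_iff₀ hK]
  rcases (add_nonneg hs ht).eq_or_lt with hst | hst
  · obtain ⟨rfl, rfl⟩ : s = 0 ∧ t = 0 := ⟨by linarith, by linarith⟩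
    simp
  · rw [sq, show K * (s ^ 2 - t ^ 2) = (s + t) * (K * (s - t)) by ring,
      mul_le_mul_iff_right₀ hst]
    constructor <;> intro h <;> linarith

lemma le_mul_infDist_iff {α : Type*} [PseudoMetricSpace α] {s : Set α} (hs : s.Nonempty)
    {c t : ℝ} (hc : 0 ≤ c) (x : α) :
    t ≤ c * infDist x s ↔ ∀ y ∈ s, t ≤ c * dist x y := by
  refine ⟨fun h y hy => h.trans (by gcongr; exact infDist_le_dist_of_mem hy), fun h => ?_⟩
  rcases hc.eq_or_lt with rfl | hc
  · obtain ⟨y, hy⟩ := hs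
    simpa using h y hy
  · rw [← div_le_iff₀' hc, le_infDist hs]
    exact fun y hy => (div_le_iff₀' hc).2 (h y hy)

theorem stmt18_general (K : ℝ) (hK : 1 ≤ K) (Γ' : Set ℂ)
    (hΓne : Γ'.Nonempty) (dz dzb : ℂ) :
    (∀ a ∈ Γ', opNorm (toMat a 0 - toMat dz dzb) ^ 2 ≤
        K * (toMat a 0 - toMat dz dzb).det) ↔
      ‖dzb‖ ≤ (K - 1) / (K + 1) * infDist dz Γ' := by
  rw [le_mul_infDist_iff hΓne (div_nonneg (by linarith) (by linarith))]
  refine forall₂_congr fun a _ => ?_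
  rw [toMat_sub_toMat, zero_sub, opNorm_toMat, det_toMat, norm_neg, dist_comm, Complex.dist_eq]
  exact sq_add_le_mul_sq_sub_sq_iff (by linarith) (norm_nonneg _) (norm_nonneg _)

/-- Lemma 5.2 of the paper, at the level of pointwise matrices: `Du(z)`, with Wirtinger
coordinates `(∂_z u, ∂_z̄ u) = (dz, dzb)`, lies in the `K`-quasiconformal envelope of a
compact set `Γ ⊆ CO(2)` (identified with `Γ' ⊆ ℂ`) iff
`|∂_z̄ u| ≤ (K-1)/(K+1) · dist(∂_z u, Γ')`. -/
theorem stmt18 (K : ℝ) (hK : 1 ≤ K) (Γ' : Set ℂ) (hΓc : IsCompact Γ')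
    (hΓne : Γ'.Nonempty) (dz dzb : ℂ) :
    (∀ a ∈ Γ', opNorm (toMat a 0 - toMat dz dzb) ^ 2 ≤
        K * (toMat a 0 - toMat dz dzb).det) ↔
      ‖dzb‖ ≤ (K - 1) / (K + 1) * infDist dz Γ' :=
  stmt18_general K hK Γ' hΓne dz dzb
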